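/- arXiv:1509.08362 — 3 statements merged into one kernel-verified Lean document; each statement's English description precedes it below -/
import Mathlib

section
/- Let J ⊆ I = {1,…,n} and let P^J be the Gibbs kernel on X^n that resamples the coordinates in J and leaves the rest fixed: P^J(x, ·) is the law of the point x' with x'_{I∖J} = x_{I∖J} and x'_J ∼ Φ_x, where (Φ_x)_{x∈X^n} is a measurable family of probability measures on X^J that depends on x only through the boundary coordinates x_{∂J}. Suppose that for every j ∈ ∂J and every pair x, z ∈ X^n with x_k = z_k for all k ≠ j, a coupling Ψ_{j,x,z} of Φ_x and Φ_z is given. Define the n×n matrix W^J by: W^J_{i,j} = 1[i=j] for i ∈ I∖J; for i ∈ J, W^J_{i,j} = sup{Ψ_{j,x,z}({(x', z') : x'_i ≠ z'_i}) : x, z ∈ X^n, x_k = z_k for all k ≠ j} if j ∈ ∂J, and W^J_{i,j} = 0 if j ∉ ∂J. Then W^J is a Wasserstein matrix for P^J; in particular a Wasserstein matrix for the ideal Gibbs block kernel can be chosen with the Gibbs block structure for J. -/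
open MeasureTheory ProbabilityTheory Finset
open scoped ENNReal

/-- Oscillation of `f` with respect to the `i`-th coordinate. -/
noncomputable def osc {n : ℕ} {X : Type*} (i : Fin n) (f : (Fin n → X) → ℝ) : ℝ :=
  sSup {d : ℝ | ∃ x z : Fin n → X, (∀ k, k ≠ i → x k = z k) ∧ d = |f x - f z|}

/-- `W` is a Wasserstein matrix for the Markov kernel `P` on `X^n`. -/
def IsWassersteinMatrix {n : ℕ} {X : Type*} [MeasurableSpace X]
    (P : Kernel (Fin n → X) (Fin n → X)) (W : Matrix (Fin n) (Fin n) ℝ) : Prop :=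
  (∀ i j, 0 ≤ W i j) ∧
  ∀ f : (Fin n → X) → ℝ, Measurable f → (∃ C, ∀ x, |f x| ≤ C) →
    ∀ j, osc j (fun x => ∫ y, f y ∂(P x)) ≤ ∑ i, osc i f * W i j

/-- `Ψ` is a coupling of `μ` and `ν`. -/
def IsCoupling {E : Type*} [MeasurableSpace E] (Ψ : Measure (E × E)) (μ ν : Measure E) : Prop :=
  Ψ.map Prod.fst = μ ∧ Ψ.map Prod.snd = ν

/-- `k`-fold composition of a Markov kernel with itself. -/
noncomputable def kpow {E : Type*} [MeasurableSpace E] (P : Kernel E E) : ℕ → Kernel E E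
  | 0 => Kernel.id
  | (k + 1) => P ∘ₖ kpow P k

/-- Maximum absolute row sum norm `‖A‖_∞`. -/
noncomputable def rowNorm {n : ℕ} (A : Matrix (Fin n) (Fin n) ℝ) : ℝ :=
  ⨆ i, ∑ j, |A i j|

/-- The boundary `∂J` of a block `J ⊆ I`. -/
def bdry {n : ℕ} (J : Finset (Fin n)) : Finset (Fin n) :=
  Finset.univ.filter fun t => t ∉ J ∧ ∃ s ∈ J, ((s : ℕ) = (t : ℕ) + 1 ∨ (t : ℕ) = (s : ℕ) + 1)

/-- `W` has the Gibbs block structure for block `J`. -/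
def GibbsBlock {n : ℕ} (J : Finset (Fin n)) (W : Matrix (Fin n) (Fin n) ℝ) : Prop :=
  (∀ i j, 0 ≤ W i j ∧ W i j ≤ 1) ∧
  (∀ i, i ∉ J → ∀ j, W i j = if i = j then 1 else 0) ∧
  (∀ i ∈ J, ∀ j, j ∉ bdry J → W i j = 0)

/-!
Fix `x, z` that differ only at site `j`, and let `x', z'` be the resampled points. If `j ∉ ∂J`,
then `Φ x = Φ z`, so `x'` and `z'` can be built from the same block and differ only at `j`. If
`j ∈ ∂J`, build them from the two components of a pair drawn from `Ψ j x z`: they then differ at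
most at `j` and at the sites `i ∈ J` where the pair disagrees. Changing one coordinate at a time,
`|f x' - f z'| ≤ osc j f + ∑ i ∈ J, osc i f * 1[x'ᵢ ≠ z'ᵢ]`; after integrating, each disagreement
probability is at most the corresponding entry of `W`.
-/

section Oscillation

variable {n : ℕ} {X : Type*} {f : (Fin n → X) → ℝ} {C : ℝ}

lemma osc_nonneg (i : Fin n) (f : (Fin n → X) → ℝ) : 0 ≤ osc i f :=
  Real.sSup_nonneg <| by rintro _ ⟨x, z, -, rfl⟩; exact abs_nonneg _

lemma osc_le {g : (Fin n → X) → ℝ} {j : Fin n} {c : ℝ} (hc : 0 ≤ c)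
    (h : ∀ x z : Fin n → X, (∀ k, k ≠ j → x k = z k) → |g x - g z| ≤ c) : osc j g ≤ c :=
  Real.sSup_le (by rintro _ ⟨x, z, hxz, rfl⟩; exact h x z hxz) hc

lemma abs_sub_le_osc (hC : ∀ x, |f x| ≤ C) {i : Fin n} {x z : Fin n → X}
    (h : ∀ k, k ≠ i → x k = z k) : |f x - f z| ≤ osc i f := by
  refine le_csSup ⟨C + C, ?_⟩ ⟨x, z, h, rfl⟩
  rintro _ ⟨x', z', -, rfl⟩
  exact (abs_sub _ _).trans (add_le_add (hC x') (hC z'))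

lemma abs_sub_le_sum_osc (hC : ∀ x, |f x| ≤ C) (S : Finset (Fin n)) {u v : Fin n → X}
    (h : ∀ k ∉ S, u k = v k) : |f u - f v| ≤ ∑ i ∈ S, osc i f := by
  induction S using Finset.induction_on generalizing u with
  | empty => simp [funext fun k => h k (Finset.notMem_empty k)]
  | @insert a S ha ih =>
    have hu : |f u - f (Function.update u a (v a))| ≤ osc a f :=
      abs_sub_le_osc hC fun k hk => (Function.update_of_ne hk _ _).symm
    have hv : |f (Function.update u a (v a)) - f v| ≤ ∑ i ∈ S, osc i f := by
      refine ih fun k hk => ?_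
      rcases eq_or_ne k a with rfl | hka
      · exact Function.update_self _ _ _
      · rw [Function.update_of_ne hka]
        exact h k (by simp [hka, hk])
    rw [Finset.sum_insert ha]
    exact (abs_sub_le _ _ _).trans (add_le_add hu hv)

lemma abs_sub_le_sum_osc_mul_indicator (hC : ∀ x, |f x| ≤ C) {E : Type*} {U V : E → Fin n → X}
    {A : Fin n → Set E} (hA : ∀ i, {q | U q i ≠ V q i} ⊆ A i) (q : E) :
    |f (U q) - f (V q)| ≤ ∑ i, osc i f * (A i).indicator 1 q := by
  classical
  have hsum : ∑ i, osc i f * (A i).indicator 1 q = ∑ i with q ∈ A i, osc i f := by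
    rw [Finset.sum_filter]
    refine Finset.sum_congr rfl fun i _ => ?_
    by_cases hq : q ∈ A i <;> simp [hq]
  rw [hsum]
  refine abs_sub_le_sum_osc hC _ fun k hk => ?_
  by_contra hne
  exact hk (Finset.mem_filter.2 ⟨Finset.mem_univ k, hA k hne⟩)

variable {E : Type*} [MeasurableSpace E]

/-- The disagreement sets need not be measurable: `ν.real` is then their outer measure, and the
proof integrates over measurable hulls. -/
lemma integral_abs_sub_le_sum_osc_mul (ν : Measure E) [IsFiniteMeasure ν]
    (hC : ∀ x, |f x| ≤ C) (U V : E → Fin n → X) :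
    ∫ q, |f (U q) - f (V q)| ∂ν ≤ ∑ i, osc i f * ν.real {q | U q i ≠ V q i} := by
  set A : Fin n → Set E := fun i => toMeasurable ν {q | U q i ≠ V q i}
  have hA : ∀ i, Integrable (fun q => osc i f * (A i).indicator 1 q) ν := fun i =>
    ((integrable_const (1 : ℝ)).indicator (measurableSet_toMeasurable _ _)).const_mul _
  calc ∫ q, |f (U q) - f (V q)| ∂ν ≤ ∫ q, ∑ i, osc i f * (A i).indicator 1 q ∂ν :=
        integral_mono_of_nonneg (ae_of_all _ fun q => abs_nonneg _)
          (integrable_finsetSum _ fun i _ => hA i)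
          (ae_of_all _ (abs_sub_le_sum_osc_mul_indicator hC fun i => subset_toMeasurable _ _))
    _ = ∑ i, osc i f * ν.real {q | U q i ≠ V q i} := by
        rw [integral_finsetSum _ fun i _ => hA i]
        refine Finset.sum_congr rfl fun i _ => ?_
        rw [integral_const_mul, integral_indicator_one (measurableSet_toMeasurable _ _),
          measureReal_def, measureReal_def, measure_toMeasurable]

variable [MeasurableSpace X]

lemma integrable_comp_of_abs_le {μ : Measure E} [IsFiniteMeasure μ] (hf : Measurable f)
    (hC : ∀ x, |f x| ≤ C) {U : E → Fin n → X} (hU : Measurable U) :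
    Integrable (fun y => f (U y)) μ :=
  .of_bound (hf.comp hU).aestronglyMeasurable C (ae_of_all _ fun y => hC (U y))

lemma abs_integral_sub_le_of_isCoupling {μ μ' : Measure E} {ν : Measure (E × E)}
    [IsFiniteMeasure ν] (hν : IsCoupling ν μ μ') (hf : Measurable f) (hC : ∀ x, |f x| ≤ C)
    {U V : E → Fin n → X} (hU : Measurable U) (hV : Measurable V) :
    |∫ y, f (U y) ∂μ - ∫ y, f (V y) ∂μ'| ≤ ∑ i, osc i f * ν.real {q | U q.1 i ≠ V q.2 i} := by
  obtain ⟨rfl, rfl⟩ := hν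
  rw [integral_map (f := fun y => f (U y)) measurable_fst.aemeasurable
      (hf.comp hU).aestronglyMeasurable,
    integral_map (f := fun y => f (V y)) measurable_snd.aemeasurable
      (hf.comp hV).aestronglyMeasurable,
    ← integral_sub (f := fun q : E × E => f (U q.1)) (g := fun q : E × E => f (V q.2))
      (integrable_comp_of_abs_le hf hC (hU.comp measurable_fst))
      (integrable_comp_of_abs_le hf hC (hV.comp measurable_snd))]
  exact abs_integral_le_integral_abs.trans (integral_abs_sub_le_sum_osc_mul ν hC _ _)

end Oscillation

section BlockUpdate

variable {ι X : Type*} [DecidableEq ι] (J : Finset ι)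

def blockUpdate (x : ι → X) (y : J → X) : ι → X :=
  fun i => if h : i ∈ J then y ⟨i, h⟩ else x i

variable {J}

@[simp]
lemma blockUpdate_apply_of_mem {i : ι} (hi : i ∈ J) (x : ι → X) (y : J → X) :
    blockUpdate J x y i = y ⟨i, hi⟩ :=
  dif_pos hi

@[simp]
lemma blockUpdate_apply_of_notMem {i : ι} (hi : i ∉ J) (x : ι → X) (y : J → X) :
    blockUpdate J x y i = x i :=
  dif_neg hi

lemma measurable_blockUpdate [MeasurableSpace X] (J : Finset ι) (x : ι → X) :
    Measurable (blockUpdate J x) := by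
  refine measurable_pi_lambda _ fun i => ?_
  by_cases hi : i ∈ J
  · simpa [hi] using measurable_pi_apply (⟨i, hi⟩ : J)
  · simp [hi]

lemma measureReal_blockUpdate_ne_le_of_notMem [MeasurableSpace X] {E : Type*}
    [MeasurableSpace E] {ν : Measure E} [IsZeroOrProbabilityMeasure ν] {x z : ι → X} {i j : ι}
    (hxz : ∀ k, k ≠ j → x k = z k) (hi : i ∉ J) (a b : E → J → X) :
    ν.real {q | blockUpdate J x (a q) i ≠ blockUpdate J z (b q) i} ≤ if i = j then 1 else 0 := by
  simp only [blockUpdate_apply_of_notMem hi]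
  split_ifs with hij
  · exact measureReal_le_one
  · simp [hxz i hij]

end BlockUpdate

section GibbsMatrix

variable {n : ℕ} {X : Type*} [MeasurableSpace X] {J : Finset (Fin n)}
  {Φ : (Fin n → X) → Measure (J → X)}
  {Ψ : Fin n → (Fin n → X) → (Fin n → X) → Measure ((J → X) × (J → X))}

noncomputable def gibbsWassersteinMatrix (J : Finset (Fin n))
    (Ψ : Fin n → (Fin n → X) → (Fin n → X) → Measure ((J → X) × (J → X))) :
    Matrix (Fin n) (Fin n) ℝ := fun i j =>
  if hi : i ∈ J then
    (if j ∈ bdry J then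
      sSup {r : ℝ | ∃ x z : Fin n → X, (∀ k, k ≠ j → x k = z k) ∧
        r = (Ψ j x z {q | q.1 ⟨i, hi⟩ ≠ q.2 ⟨i, hi⟩}).toReal}
    else 0)
  else (if i = j then 1 else 0)

lemma gibbsWassersteinMatrix_of_notMem {i : Fin n} (hi : i ∉ J) (j : Fin n) :
    gibbsWassersteinMatrix J Ψ i j = if i = j then 1 else 0 :=
  dif_neg hi

lemma gibbsWassersteinMatrix_of_notMem_bdry {i j : Fin n} (hi : i ∈ J) (hj : j ∉ bdry J) :
    gibbsWassersteinMatrix J Ψ i j = 0 := by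
  simp [gibbsWassersteinMatrix, hi, hj]

variable {i j : Fin n}

lemma le_gibbsWassersteinMatrix_of_mem_bdry
    (hΨ : ∀ j ∈ bdry J, ∀ x z : Fin n → X, (∀ k, k ≠ j → x k = z k) →
      IsProbabilityMeasure (Ψ j x z))
    (hi : i ∈ J) (hj : j ∈ bdry J) {x z : Fin n → X} (hxz : ∀ k, k ≠ j → x k = z k) :
    (Ψ j x z).real {q | q.1 ⟨i, hi⟩ ≠ q.2 ⟨i, hi⟩} ≤ gibbsWassersteinMatrix J Ψ i j := by
  simp only [gibbsWassersteinMatrix, dif_pos hi, if_pos hj]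
  refine le_csSup ⟨1, ?_⟩ ⟨x, z, hxz, rfl⟩
  rintro _ ⟨x', z', hxz', rfl⟩
  have := hΨ j hj x' z' hxz'
  exact measureReal_le_one

lemma gibbsWassersteinMatrix_mem_Icc
    (hΨ : ∀ j ∈ bdry J, ∀ x z : Fin n → X, (∀ k, k ≠ j → x k = z k) →
      IsProbabilityMeasure (Ψ j x z)) (i j : Fin n) :
    0 ≤ gibbsWassersteinMatrix J Ψ i j ∧ gibbsWassersteinMatrix J Ψ i j ≤ 1 := by
  by_cases hi : i ∈ J
  · by_cases hj : j ∈ bdry J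
    · simp only [gibbsWassersteinMatrix, dif_pos hi, if_pos hj]
      constructor
      · exact Real.sSup_nonneg (by rintro _ ⟨x, z, -, rfl⟩; exact ENNReal.toReal_nonneg)
      · refine Real.sSup_le ?_ zero_le_one
        rintro _ ⟨x, z, hxz, rfl⟩
        have := hΨ j hj x z hxz
        exact measureReal_le_one
    · simp [gibbsWassersteinMatrix_of_notMem_bdry hi hj]
  · rw [gibbsWassersteinMatrix_of_notMem hi]
    split_ifs <;> norm_num

lemma gibbsBlock_gibbsWassersteinMatrix
    (hΨ : ∀ j ∈ bdry J, ∀ x z : Fin n → X, (∀ k, k ≠ j → x k = z k) →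
      IsProbabilityMeasure (Ψ j x z)) :
    GibbsBlock J (gibbsWassersteinMatrix J Ψ) :=
  ⟨gibbsWassersteinMatrix_mem_Icc hΨ, fun _ hi j => gibbsWassersteinMatrix_of_notMem hi j,
    fun _ hi _ hj => gibbsWassersteinMatrix_of_notMem_bdry hi hj⟩

lemma abs_integral_blockUpdate_sub_le_sum_osc_mul (hΦ : ∀ x, IsProbabilityMeasure (Φ x))
    (hΦdep : ∀ x z : Fin n → X, (∀ i ∈ bdry J, x i = z i) → Φ x = Φ z)
    (hΨ : ∀ j ∈ bdry J, ∀ x z : Fin n → X, (∀ k, k ≠ j → x k = z k) →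
      IsProbabilityMeasure (Ψ j x z) ∧ IsCoupling (Ψ j x z) (Φ x) (Φ z))
    {f : (Fin n → X) → ℝ} (hf : Measurable f) {C : ℝ} (hC : ∀ x, |f x| ≤ C)
    {x z : Fin n → X} (hxz : ∀ k, k ≠ j → x k = z k) :
    |∫ y, f (blockUpdate J x y) ∂Φ x - ∫ y, f (blockUpdate J z y) ∂Φ z| ≤
      ∑ i, osc i f * gibbsWassersteinMatrix J Ψ i j := by
  by_cases hj : j ∈ bdry J
  · have hΨp := fun j hj x z hxz => (hΨ j hj x z hxz).1
    have := hΨp j hj x z hxz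
    refine (abs_integral_sub_le_of_isCoupling (hΨ j hj x z hxz).2 hf hC
      (measurable_blockUpdate J x) (measurable_blockUpdate J z)).trans
      (Finset.sum_le_sum fun i _ => mul_le_mul_of_nonneg_left ?_ (osc_nonneg i f))
    by_cases hi : i ∈ J
    · simpa [blockUpdate_apply_of_mem hi] using
        le_gibbsWassersteinMatrix_of_mem_bdry hΨp hi hj hxz
    · rw [gibbsWassersteinMatrix_of_notMem hi]
      exact measureReal_blockUpdate_ne_le_of_notMem hxz hi _ _
  · -- `x` and `z` differ only at `j ∉ ∂J`, so both blocks are resampled from the same law.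
    rw [hΦdep x z fun i hi => hxz i (ne_of_mem_of_not_mem hi hj),
      ← integral_sub (integrable_comp_of_abs_le hf hC (measurable_blockUpdate J x))
        (integrable_comp_of_abs_le hf hC (measurable_blockUpdate J z))]
    refine abs_integral_le_integral_abs.trans <| (integral_abs_sub_le_sum_osc_mul _ hC _ _).trans <|
      Finset.sum_le_sum fun i _ => mul_le_mul_of_nonneg_left ?_ (osc_nonneg i f)
    by_cases hi : i ∈ J
    · simp [blockUpdate_apply_of_mem hi, gibbsWassersteinMatrix_of_notMem_bdry hi hj]
    · rw [gibbsWassersteinMatrix_of_notMem hi]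
      exact measureReal_blockUpdate_ne_le_of_notMem hxz hi id id

end GibbsMatrix

theorem stmt11_general {n : ℕ} {X : Type*} [MeasurableSpace X]
    (J : Finset (Fin n))
    (Φ : (Fin n → X) → Measure ({ i : Fin n // i ∈ J } → X))
    (hΦp : ∀ x, IsProbabilityMeasure (Φ x))
    (hΦdep : ∀ x z : Fin n → X, (∀ i ∈ bdry J, x i = z i) → Φ x = Φ z)
    (P : Kernel (Fin n → X) (Fin n → X))
    (hP : ∀ x, P x =
      (Φ x).map (fun zJ => fun i : Fin n => if h : i ∈ J then zJ ⟨i, h⟩ else x i))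
    (Ψ : Fin n → (Fin n → X) → (Fin n → X) →
      Measure (({ i : Fin n // i ∈ J } → X) × ({ i : Fin n // i ∈ J } → X)))
    (hΨ : ∀ j ∈ bdry J, ∀ x z : Fin n → X, (∀ k, k ≠ j → x k = z k) →
      IsProbabilityMeasure (Ψ j x z) ∧
      (Ψ j x z).map Prod.fst = Φ x ∧ (Ψ j x z).map Prod.snd = Φ z)
    (W : Matrix (Fin n) (Fin n) ℝ)
    (hWdef : ∀ i j, W i j =
      if hi : i ∈ J then
        (if j ∈ bdry J then
          sSup {r : ℝ | ∃ x z : Fin n → X, (∀ k, k ≠ j → x k = z k) ∧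
            r = (Ψ j x z {q | q.1 ⟨i, hi⟩ ≠ q.2 ⟨i, hi⟩}).toReal}
        else 0)
      else (if i = j then 1 else 0)) :
    IsWassersteinMatrix P W ∧ GibbsBlock J W := by
  obtain rfl : W = gibbsWassersteinMatrix J Ψ := Matrix.ext hWdef
  have hW := gibbsBlock_gibbsWassersteinMatrix fun j hj x z hxz => (hΨ j hj x z hxz).1
  refine ⟨⟨fun i j => (hW.1 i j).1, fun f hf ⟨C, hC⟩ j => ?_⟩, hW⟩
  refine osc_le (Finset.sum_nonneg fun i _ => mul_nonneg (osc_nonneg i f) (hW.1 i j).1)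
    fun x z hxz => ?_
  have hP' : ∀ x, P x = (Φ x).map (blockUpdate J x) := hP
  rw [hP', hP', integral_map (measurable_blockUpdate J x).aemeasurable hf.aestronglyMeasurable,
    integral_map (measurable_blockUpdate J z).aemeasurable hf.aestronglyMeasurable]
  exact abs_integral_blockUpdate_sub_le_sum_osc_mul hΦp hΦdep hΨ hf hC hxz

theorem stmt11 {n : ℕ} {X : Type*} [MeasurableSpace X] [StandardBorelSpace X] [Nonempty X]
    (J : Finset (Fin n))
    (Φ : (Fin n → X) → Measure ({ i : Fin n // i ∈ J } → X))
    (hΦp : ∀ x, IsProbabilityMeasure (Φ x))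
    (hΦdep : ∀ x z : Fin n → X, (∀ i ∈ bdry J, x i = z i) → Φ x = Φ z)
    (P : Kernel (Fin n → X) (Fin n → X)) [IsMarkovKernel P]
    (hP : ∀ x, P x =
      (Φ x).map (fun zJ => fun i : Fin n => if h : i ∈ J then zJ ⟨i, h⟩ else x i))
    (Ψ : Fin n → (Fin n → X) → (Fin n → X) →
      Measure (({ i : Fin n // i ∈ J } → X) × ({ i : Fin n // i ∈ J } → X)))
    (hΨ : ∀ j ∈ bdry J, ∀ x z : Fin n → X, (∀ k, k ≠ j → x k = z k) →
      IsProbabilityMeasure (Ψ j x z) ∧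
      (Ψ j x z).map Prod.fst = Φ x ∧ (Ψ j x z).map Prod.snd = Φ z)
    (W : Matrix (Fin n) (Fin n) ℝ)
    (hWdef : ∀ i j, W i j =
      if hi : i ∈ J then
        (if j ∈ bdry J then
          sSup {r : ℝ | ∃ x z : Fin n → X, (∀ k, k ≠ j → x k = z k) ∧
            r = (Ψ j x z {q | q.1 ⟨i, hi⟩ ≠ q.2 ⟨i, hi⟩}).toReal}
        else 0)
      else (if i = j then 1 else 0)) :
    IsWassersteinMatrix P W ∧ GibbsBlock J W :=
  stmt11_general J Φ hΦp hΦdep P hP Ψ hΨ W hWdef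
end

section
/- Let 𝒥 = (J_1,…,J_m) be an arbitrary cover of I = {1,…,n} and for each k let W^{J_k} have the Gibbs block structure for J_k. Let 𝒲 = W^{J_m}·W^{J_{m−1}}⋯W^{J_1}. For j ∈ I define a_j = min{k : j ∈ J_k} and b_j = min{k : j ∈ ∂J_k} (with the convention min ∅ = ∞). If a_j < b_j, then the j-th column of 𝒲 is zero, i.e. 𝒲e_j = 0 where e_j is the j-th standard basis vector. -/
open Finset

/-- The list `[m, m-1, …, 1]`. -/
def descList (m : ℕ) : List ℕ := (List.range m).map fun i => m - i

/-- A block is a (nonempty) integer interval. -/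
def IsIntervalBlock {n : ℕ} (J : Finset (Fin n)) : Prop :=
  J.Nonempty ∧ ∀ a ∈ J, ∀ b ∈ J, ∀ c : Fin n, a ≤ c → c ≤ b → c ∈ J

/-- Smallest index of a block (as a natural number). -/
noncomputable def blockMin {n : ℕ} (J : Finset (Fin n)) : ℕ :=
  sInf {t : ℕ | ∃ s ∈ J, (s : ℕ) = t}

/-- Largest index of a block (as a natural number). -/
def blockMax {n : ℕ} (J : Finset (Fin n)) : ℕ := J.sup fun t => (t : ℕ)

/-- Condition (B1): blocks are intervals, ordered by their min and max elements. -/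
def CondB1 {n : ℕ} (m : ℕ) (J : ℕ → Finset (Fin n)) : Prop :=
  (∀ k ∈ Finset.Icc 1 m, IsIntervalBlock (J k)) ∧
  ∀ j k, 1 ≤ j → j < k → k ≤ m →
    blockMin (J j) < blockMin (J k) ∧ blockMax (J j) < blockMax (J k)

/-- Condition (B2): non-consecutive blocks are separated. -/
def CondB2 {n : ℕ} (m : ℕ) (J : ℕ → Finset (Fin n)) : Prop :=
  ∀ j k, 1 ≤ j → j + 2 ≤ k → k ≤ m → blockMax (J j) + 1 < blockMin (J k)

/-- Matrix entry addressed with integer indices; out-of-range indices give `0`. -/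
noncomputable def entryZ {n : ℕ} (A : Matrix (Fin n) (Fin n) ℝ) (i j : ℤ) : ℝ :=
  if hi : 0 ≤ i ∧ i < (n : ℤ) then
    if hj : 0 ≤ j ∧ j < (n : ℤ) then A ⟨i.toNat, by omega⟩ ⟨j.toNat, by omega⟩ else 0
  else 0

/-!
The first block `J_a` containing `j` exists because `a_j < b_j ≤ ∞`. For `k < a` we have
`j ∉ J_k` and, as `k < a_j < b_j`, also `j ∉ ∂J_k`, so `W^{J_k}` fixes `e_j`. Since `∂J_a` is
disjoint from `J_a`, the column `j` of `W^{J_a}` vanishes, and the later factors keep it zero.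
-/

open Matrix

lemma descList_succ (k : ℕ) : descList (k + 1) = (k + 1) :: descList k := by
  simp only [descList, List.range_succ_eq_map, List.map_cons, List.map_map, Nat.sub_zero]
  congr 1
  refine List.map_congr_left fun x _ => ?_
  simp only [Function.comp]
  omega

section DescListProd

variable {ι R : Type*} [Fintype ι] [DecidableEq ι] [Semiring R]
  (M : ℕ → Matrix ι ι R) (v : ι → R)

lemma descList_prod_mulVec_succ (k : ℕ) :
    ((descList (k + 1)).map M).prod *ᵥ v = M (k + 1) *ᵥ (((descList k).map M).prod *ᵥ v) := by
  rw [descList_succ, List.map_cons, List.prod_cons, mulVec_mulVec]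

lemma descList_prod_mulVec_eq_self {a : ℕ} (hfix : ∀ k, 1 ≤ k → k ≤ a → M k *ᵥ v = v) :
    ((descList a).map M).prod *ᵥ v = v := by
  induction a with
  | zero => simp [descList]
  | succ k ih =>
    rw [descList_prod_mulVec_succ, ih fun i hi hik => hfix i hi (by omega)]
    exact hfix (k + 1) (by omega) le_rfl

lemma descList_prod_mulVec_eq_zero {a m : ℕ} (ha : 1 ≤ a) (ham : a ≤ m)
    (hfix : ∀ k, 1 ≤ k → k < a → M k *ᵥ v = v) (hkill : M a *ᵥ v = 0) :
    ((descList m).map M).prod *ᵥ v = 0 := by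
  obtain ⟨b, rfl⟩ : ∃ b, a = b + 1 := ⟨a - 1, by omega⟩
  induction m, ham using Nat.le_induction with
  | base =>
    rw [descList_prod_mulVec_succ,
      descList_prod_mulVec_eq_self M v fun k hk hkb => hfix k hk (by omega), hkill]
  | succ m _ ih => rw [descList_prod_mulVec_succ, ih, mulVec_zero]

end DescListProd

lemma notMem_bdry_of_mem {n : ℕ} {J : Finset (Fin n)} {j : Fin n} (hj : j ∈ J) :
    j ∉ bdry J := by
  simp [bdry, hj]

namespace GibbsBlock

variable {n : ℕ} {J : Finset (Fin n)} {W : Matrix (Fin n) (Fin n) ℝ} {j : Fin n}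

lemma mulVec_single_of_notMem (hW : GibbsBlock J W) (hjJ : j ∉ J) (hjb : j ∉ bdry J) :
    W *ᵥ Pi.single j 1 = Pi.single j 1 := by
  ext i
  rw [mulVec_single_one, col_apply]
  by_cases hi : i ∈ J
  · have hij : i ≠ j := by rintro rfl; exact hjJ hi
    rw [hW.2.2 i hi j hjb, Pi.single_apply, if_neg hij]
  · rw [hW.2.1 i hi j, Pi.single_apply, eq_comm]

lemma mulVec_single_of_mem (hW : GibbsBlock J W) (hjJ : j ∈ J) :
    W *ᵥ Pi.single j 1 = 0 := by
  ext i
  rw [mulVec_single_one, col_apply, Pi.zero_apply]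
  by_cases hi : i ∈ J
  · exact hW.2.2 i hi j (notMem_bdry_of_mem hjJ)
  · have hij : i ≠ j := by rintro rfl; exact hi hjJ
    rw [hW.2.1 i hi j, if_neg hij]

end GibbsBlock

lemma exists_first_of_sInf_lt_sInf {m : ℕ} {p q : ℕ → Prop}
    (h : sInf {c : ℕ∞ | ∃ k ∈ Finset.Icc 1 m, p k ∧ c = (k : ℕ∞)} <
      sInf {c : ℕ∞ | ∃ k ∈ Finset.Icc 1 m, q k ∧ c = (k : ℕ∞)}) :
    ∃ a ∈ Finset.Icc 1 m, p a ∧ ∀ k, 1 ≤ k → k < a → ¬ p k ∧ ¬ q k := by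
  set P := {c : ℕ∞ | ∃ k ∈ Finset.Icc 1 m, p k ∧ c = (k : ℕ∞)}
  set Q := {c : ℕ∞ | ∃ k ∈ Finset.Icc 1 m, q k ∧ c = (k : ℕ∞)}
  have hP : P.Nonempty := by
    by_contra hP
    rw [Set.not_nonempty_iff_eq_empty.mp hP, sInf_empty] at h
    exact not_top_lt h
  obtain ⟨a, ha, hpa, hPa⟩ := csInf_mem hP
  refine ⟨a, ha, hpa, fun k hk hka => ?_⟩
  have hkm : k ∈ Finset.Icc 1 m := Finset.mem_Icc.2 ⟨hk, by grind⟩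
  have hka' : (k : ℕ∞) < sInf P := by rw [hPa]; exact_mod_cast hka
  have hPk : p k → sInf P ≤ k := fun hpk => csInf_le' ⟨k, hkm, hpk, rfl⟩
  have hQk : q k → sInf Q ≤ k := fun hqk => csInf_le' ⟨k, hkm, hqk, rfl⟩
  exact ⟨fun hpk => (hPk hpk).not_gt hka', fun hqk => (hQk hqk).not_gt (hka'.trans h)⟩

theorem stmt12_general {n m : ℕ}
    (J : ℕ → Finset (Fin n)) (W : ℕ → Matrix (Fin n) (Fin n) ℝ)
    (hblock : ∀ k ∈ Finset.Icc 1 m, GibbsBlock (J k) (W k))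
    (j : Fin n)
    (hab : sInf {c : ℕ∞ | ∃ k ∈ Finset.Icc 1 m, j ∈ J k ∧ c = (k : ℕ∞)} <
           sInf {c : ℕ∞ | ∃ k ∈ Finset.Icc 1 m, j ∈ bdry (J k) ∧ c = (k : ℕ∞)}) :
    ∀ i : Fin n, (((descList m).map W).prod) i j = 0 := by
  obtain ⟨a, ha, hja, hbefore⟩ := exists_first_of_sInf_lt_sInf hab
  rw [Finset.mem_Icc] at ha
  have hfix : ∀ k, 1 ≤ k → k < a → W k *ᵥ Pi.single j 1 = Pi.single j 1 := fun k hk hka =>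
    (hblock k (Finset.mem_Icc.2 ⟨hk, by omega⟩)).mulVec_single_of_notMem
      (hbefore k hk hka).1 (hbefore k hk hka).2
  have hkill : W a *ᵥ Pi.single j 1 = 0 :=
    (hblock a (Finset.mem_Icc.2 ha)).mulVec_single_of_mem hja
  intro i
  have hcol := descList_prod_mulVec_eq_zero W _ ha.1 ha.2 hfix hkill
  rw [mulVec_single_one] at hcol
  exact congrFun hcol i

theorem stmt12 {n m : ℕ} (hn : 1 ≤ n) (hm : 1 ≤ m)
    (J : ℕ → Finset (Fin n)) (W : ℕ → Matrix (Fin n) (Fin n) ℝ)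
    (hcover : ∀ i : Fin n, ∃ k ∈ Finset.Icc 1 m, i ∈ J k)
    (hblock : ∀ k ∈ Finset.Icc 1 m, GibbsBlock (J k) (W k))
    (j : Fin n)
    (hab : sInf {c : ℕ∞ | ∃ k ∈ Finset.Icc 1 m, j ∈ J k ∧ c = (k : ℕ∞)} <
           sInf {c : ℕ∞ | ∃ k ∈ Finset.Icc 1 m, j ∈ bdry (J k) ∧ c = (k : ℕ∞)}) :
    ∀ i : Fin n, (((descList m).map W).prod) i j = 0 :=
  stmt12_general J W hblock j hab
end

section
/- Let m be odd and let 𝒥 = (J_1,…,J_m) be a cover of I = {1,…,n} satisfying conditions (B1) and (B2). For each k let W^{J_k} have the Gibbs block structure for J_k, let ε ∈ [0,1), and let Ŵ^{J_k} have entries Ŵ^{J_k}_{i,j} = W^{J_k}_{i,j} + ε·1[i ∈ J_k and j ∈ J_k ∪ ∂J_k]. Set 𝒲̂ = 𝒲̂_even·𝒲̂_odd with 𝒲̂_odd = Ŵ^{J_m}·Ŵ^{J_{m−2}}⋯Ŵ^{J_3}·Ŵ^{J_1} and 𝒲̂_even = Ŵ^{J_{m−1}}⋯Ŵ^{J_4}·Ŵ^{J_2}.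 Let J_{−k} = ⋃_{l≠k} J_l, L = max_k |J_k|, λ = max_k max_{i ∈ I∖J_{−k}} (W^{J_k}_{i,∂−J_k} + W^{J_k}_{i,∂+J_k}), and W̄ = max_k max_{i∈J_k} Σ_{j∈∂J_k} W^{J_k}_{i,j} (with conventions W^{J_1}_{i,∂−J_1} = 0, W^{J_m}_{i,∂+J_m} = 0). Let r be a vector with [r]_i = a when i ∈ I∖J_{−k} for even k, [r]_i = a' when i ∈ I∖J_{−k} for odd k, and [r]_i = b when i ∈ J_k ∩ J_{−k} for even k, where a, a', b are positive constants, and set c = 2a + L·max(a', b). Then: [𝒲̂r]_i ≤ λ²a + ε(λc + 2λa + 2εc + La·max(1,W̄) + εLc) for i ∈ I∖J_{−k} with k even; [𝒲̂r]_i ≤ λa + ε(2a + L·max(a',b)) for i ∈ I∖J_{−k} with k odd; and [𝒲̂r]_i ≤ λ·W̄·a + ε(W̄c + 2λa + 2εc + La·max(1,W̄) + εLc) for i ∈ J_k ∩ J_{−k} with k even. -/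
open Finset

/-- `J_{-k} = ⋃_{l ≠ k} J_l`. -/
def Jminus {n : ℕ} (m : ℕ) (J : ℕ → Finset (Fin n)) (k : ℕ) : Finset (Fin n) :=
  ((Finset.Icc 1 m).erase k).biUnion J

/-- Left boundary entry `W^{J_k}_{i, ∂−J_k}`, with the conventions that it is `0` for the
first block `k = 1` and for nonexistent boundary points. -/
noncomputable def eL {n : ℕ} (m : ℕ) (J : ℕ → Finset (Fin n))
    (W : ℕ → Matrix (Fin n) (Fin n) ℝ) (k : ℕ) (i : Fin n) : ℝ :=
  if k = 1 then 0 else entryZ (W k) (i : ℤ) ((blockMin (J k) : ℤ) - 1)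

/-- Right boundary entry `W^{J_k}_{i, ∂+J_k}`, with the conventions that it is `0` for the
last block `k = m` and for nonexistent boundary points. -/
noncomputable def eR {n : ℕ} (m : ℕ) (J : ℕ → Finset (Fin n))
    (W : ℕ → Matrix (Fin n) (Fin n) ℝ) (k : ℕ) (i : Fin n) : ℝ :=
  if k = m then 0 else entryZ (W k) (i : ℤ) ((blockMax (J k) : ℤ) + 1)

/-- The ε-perturbed matrix `Ŵ^{J_k}`. -/
noncomputable def hatW {n : ℕ} (J : ℕ → Finset (Fin n))
    (W : ℕ → Matrix (Fin n) (Fin n) ℝ) (ε : ℝ) (k : ℕ) : Matrix (Fin n) (Fin n) ℝ :=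
  fun i j => W k i j + if i ∈ J k ∧ j ∈ J k ∪ bdry (J k) then ε else 0


/-!
Blocks of equal parity are at distance at least two, so none of them meets another's closure
`J ∪ ∂J`. Hence row `i` of the product of the `Ŵ^{J_k}` over one parity class is row `i` of the
unique factor whose block contains `i`, or the identity row if there is none. For `i ∈ J_k`, row
`i` of `Ŵ^{J_k}` puts the weights `W_{i,∂J_k}` on the at most two points of `∂J_k` and `ε` on the
at most `L + 2` points of `J_k ∪ ∂J_k`, so it maps a vector bounded by `B` on `∂J_k` and by `C ≥ 0`
on `J_k` to at most `(W_{i,∂−J_k} + W_{i,∂+J_k}) B + ε (2B + L C)`. Apply this first to `r` and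
the odd blocks (a boundary point of an odd block lies in a single block, which is even, so `r = a`
there), then to the resulting vector and the even blocks.
-/

open Matrix

variable {n : ℕ}

section IntervalBlock

variable {J : Finset (Fin n)}

lemma exists_val_eq_blockMin (h : J.Nonempty) : ∃ s ∈ J, (s : ℕ) = blockMin J :=
  let ⟨s, hs⟩ := h
  Nat.sInf_mem (s := {t | ∃ s ∈ J, (s : ℕ) = t}) ⟨s, s, hs, rfl⟩

lemma blockMin_le {t : Fin n} (ht : t ∈ J) : blockMin J ≤ t :=
  Nat.sInf_le ⟨t, ht, rfl⟩

lemma exists_val_eq_blockMax (h : J.Nonempty) : ∃ s ∈ J, (s : ℕ) = blockMax J :=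
  let ⟨s, hs, he⟩ := exists_mem_eq_sup J h fun t : Fin n => (t : ℕ)
  ⟨s, hs, he.symm⟩

lemma le_blockMax {t : Fin n} (ht : t ∈ J) : (t : ℕ) ≤ blockMax J :=
  le_sup (f := fun t : Fin n => (t : ℕ)) ht

lemma blockMin_le_blockMax (h : J.Nonempty) : blockMin J ≤ blockMax J :=
  let ⟨_, hs⟩ := h
  (blockMin_le hs).trans (le_blockMax hs)

lemma notMem_of_mem_bdry {t : Fin n} (ht : t ∈ bdry J) : t ∉ J :=
  (mem_filter.1 ht).2.1

lemma disjoint_bdry : Disjoint J (bdry J) :=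
  disjoint_right.2 fun _ => notMem_of_mem_bdry

lemma bounds_of_mem_union_bdry {t : Fin n} (ht : t ∈ J ∪ bdry J) :
    blockMin J ≤ t + 1 ∧ (t : ℕ) ≤ blockMax J + 1 := by
  rcases mem_union.1 ht with ht | ht
  · exact ⟨(blockMin_le ht).trans t.val.le_succ, (le_blockMax ht).trans (blockMax J).le_succ⟩
  · obtain ⟨-, s, hs, hadj⟩ := (mem_filter.1 ht).2
    have := blockMin_le hs
    have := le_blockMax hs
    omega

lemma IsIntervalBlock.mem_bdry_iff (hJ : IsIntervalBlock J) {t : Fin n} :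
    t ∈ bdry J ↔ (t : ℤ) = blockMin J - 1 ∨ (t : ℤ) = blockMax J + 1 := by
  obtain ⟨hne, hconv⟩ := hJ
  obtain ⟨s₀, hs₀, hs₀v⟩ := exists_val_eq_blockMin hne
  obtain ⟨s₁, hs₁, hs₁v⟩ := exists_val_eq_blockMax hne
  simp only [bdry, mem_filter, mem_univ, true_and]
  constructor
  · rintro ⟨htJ, s, hs, hadj⟩
    have := blockMin_le hs
    have := le_blockMax hs
    by_contra! h
    exact htJ (hconv s₀ hs₀ s₁ hs₁ t (Fin.le_iff_val_le_val.2 (by omega))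
      (Fin.le_iff_val_le_val.2 (by omega)))
  · rintro (h | h)
    · refine ⟨fun ht => ?_, s₀, hs₀, Or.inl (by omega)⟩
      have := blockMin_le ht
      omega
    · refine ⟨fun ht => ?_, s₁, hs₁, Or.inr (by omega)⟩
      have := le_blockMax ht
      omega

lemma IsIntervalBlock.bdry_eq (hJ : IsIntervalBlock J) :
    bdry J = univ.filter (fun t : Fin n => (t : ℤ) = blockMin J - 1) ∪
      univ.filter (fun t : Fin n => (t : ℤ) = blockMax J + 1) := by
  ext t
  simp [hJ.mem_bdry_iff]

lemma card_filter_val_eq_le_one (j : ℤ) :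
    (univ.filter fun t : Fin n => (t : ℤ) = j).card ≤ 1 :=
  card_le_one.2 fun a ha b hb => Fin.ext (by simp only [mem_filter] at ha hb; omega)

lemma IsIntervalBlock.card_bdry_le_two (hJ : IsIntervalBlock J) : (bdry J).card ≤ 2 := by
  rw [hJ.bdry_eq]
  exact (card_union_le _ _).trans
    (add_le_add (card_filter_val_eq_le_one _) (card_filter_val_eq_le_one _))

lemma sum_filter_val_eq_entryZ (A : Matrix (Fin n) (Fin n) ℝ) (i : Fin n) (j : ℤ) :
    ∑ t ∈ univ.filter (fun t : Fin n => (t : ℤ) = j), A i t = entryZ A i j := by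
  have hi := i.isLt
  rw [entryZ, dif_pos (by omega)]
  split_ifs with hj
  · have : univ.filter (fun t : Fin n => (t : ℤ) = j) = {⟨j.toNat, by omega⟩} := by
      ext t
      simp only [mem_filter, mem_univ, true_and, mem_singleton, Fin.ext_iff]
      omega
    rw [this, sum_singleton]
    congr
  · rw [filter_false_of_mem fun t _ ht => hj (by have := t.isLt; omega), sum_empty]

lemma IsIntervalBlock.sum_bdry_eq (hJ : IsIntervalBlock J) (A : Matrix (Fin n) (Fin n) ℝ)
    (i : Fin n) :
    ∑ t ∈ bdry J, A i t = entryZ A i (blockMin J - 1) + entryZ A i (blockMax J + 1) := by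
  have := blockMin_le_blockMax hJ.1
  rw [hJ.bdry_eq, sum_union (disjoint_filter.2 fun t _ h₁ h₂ => by omega),
    sum_filter_val_eq_entryZ, sum_filter_val_eq_entryZ]

end IntervalBlock

section ListProd

variable {R : Type*} [Semiring R] {M : ℕ → Matrix (Fin n) (Fin n) R} {S : List ℕ} {i : Fin n}

lemma row_mul_of_row_eq_one_row {A B : Matrix (Fin n) (Fin n) R}
    (h : A i = (1 : Matrix (Fin n) (Fin n) R) i) : (A * B) i = B i := by
  ext j
  rw [mul_apply, h, ← mul_apply, one_mul]

lemma mulVec_apply_eq_of_row_eq {A B : Matrix (Fin n) (Fin n) R} (h : A i = B i)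
    (v : Fin n → R) : (A *ᵥ v) i = (B *ᵥ v) i := by
  rw [mulVec_apply, mulVec_apply, row_apply', row_apply', h]

lemma row_list_prod_eq_one_row (h : ∀ l ∈ S, M l i = (1 : Matrix (Fin n) (Fin n) R) i) :
    (S.map M).prod i = (1 : Matrix (Fin n) (Fin n) R) i := by
  induction S with
  | nil => rfl
  | cons s S ih =>
    rw [List.map_cons, List.prod_cons, row_mul_of_row_eq_one_row (h s (by simp))]
    exact ih fun l hl => h l (by simp [hl])

lemma row_list_prod_eq_of_mem (hS : S.Nodup) {k : ℕ} (hk : k ∈ S)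
    (hrow : ∀ l ∈ S, l ≠ k → M l i = (1 : Matrix (Fin n) (Fin n) R) i)
    (hsupp : ∀ t, M k i t ≠ 0 → ∀ l ∈ S, l ≠ k → M l t = (1 : Matrix (Fin n) (Fin n) R) t) :
    (S.map M).prod i = M k i := by
  induction S with
  | nil => simp at hk
  | cons s S ih =>
    rw [List.map_cons, List.prod_cons]
    obtain ⟨hsS, hS⟩ := List.nodup_cons.1 hS
    by_cases hsk : s = k
    · subst hsk
      have hP : ∀ t j,
          M s i t * (S.map M).prod t j = M s i t * (1 : Matrix (Fin n) (Fin n) R) t j := by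
        intro t j
        by_cases ht : M s i t = 0
        · simp only [ht, zero_mul]
        · rw [row_list_prod_eq_one_row fun l hl =>
            hsupp t ht l (by simp [hl]) fun h => hsS (h ▸ hl)]
      ext j
      rw [mul_apply]
      simp only [hP]
      rw [← mul_apply, mul_one]
    · rw [row_mul_of_row_eq_one_row (hrow s (by simp) hsk)]
      exact ih hS ((List.mem_cons.1 hk).resolve_left (Ne.symm hsk))
        (fun l hl => hrow l (by simp [hl])) fun t ht l hl => hsupp t ht l (by simp [hl])

end ListProd

section HatW

variable {J : ℕ → Finset (Fin n)} {W : ℕ → Matrix (Fin n) (Fin n) ℝ} {ε : ℝ} {k : ℕ} {i : Fin n}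

lemma hatW_row_of_notMem (hW : GibbsBlock (J k) (W k)) (hi : i ∉ J k) :
    hatW J W ε k i = (1 : Matrix (Fin n) (Fin n) ℝ) i := by
  ext j
  simp [hatW, hi, hW.2.1 i hi j, one_apply]

lemma hatW_apply_eq_zero (hW : GibbsBlock (J k) (W k)) (hi : i ∈ J k) {j : Fin n}
    (hj : j ∉ J k ∪ bdry (J k)) : hatW J W ε k i j = 0 := by
  rw [hatW, if_neg fun h => hj h.2, add_zero]
  exact hW.2.2 i hi j fun h => hj (mem_union_right _ h)

lemma sum_hatW_mul_eq (hW : GibbsBlock (J k) (W k)) (hi : i ∈ J k) (v : Fin n → ℝ) :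
    ∑ j, hatW J W ε k i j * v j =
      ∑ j ∈ bdry (J k), W k i j * v j + ε * ∑ j ∈ J k ∪ bdry (J k), v j := by
  simp only [hatW, add_mul, sum_add_distrib, hi, true_and, ite_mul, zero_mul, sum_ite_mem,
    univ_inter, mul_sum]
  congr 1
  exact (sum_subset (subset_univ _) fun j _ hj => by rw [hW.2.2 i hi j hj, zero_mul]).symm

lemma sum_hatW_mul_le (hJ : IsIntervalBlock (J k)) (hW : GibbsBlock (J k) (W k)) (hε : 0 ≤ ε)
    (hi : i ∈ J k) {v : Fin n → ℝ} {B C : ℝ} {L : ℕ} (hB : 0 ≤ B) (hC : 0 ≤ C)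
    (hL : (J k).card ≤ L) (hvB : ∀ j ∈ bdry (J k), v j ≤ B) (hvC : ∀ j ∈ J k, v j ≤ C) :
    ∑ j, hatW J W ε k i j * v j ≤
      (∑ j ∈ bdry (J k), W k i j) * B + ε * (2 * B + L * C) := by
  have h_bdry_W : ∑ j ∈ bdry (J k), W k i j * v j ≤ (∑ j ∈ bdry (J k), W k i j) * B := by
    rw [sum_mul]
    exact sum_le_sum fun j hj => mul_le_mul_of_nonneg_left (hvB j hj) (hW.1 i j).1
  have h_bdry : ∑ j ∈ bdry (J k), v j ≤ 2 * B := calc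
    _ ≤ (bdry (J k)).card • B := sum_le_card_nsmul _ _ _ hvB
    _ ≤ 2 * B := by
      rw [nsmul_eq_mul]
      exact mul_le_mul_of_nonneg_right (by exact_mod_cast hJ.card_bdry_le_two) hB
  have h_block : ∑ j ∈ J k, v j ≤ L * C := calc
    _ ≤ (J k).card • C := sum_le_card_nsmul _ _ _ hvC
    _ ≤ L * C := by
      rw [nsmul_eq_mul]
      exact mul_le_mul_of_nonneg_right (by exact_mod_cast hL) hC
  rw [sum_hatW_mul_eq hW hi, sum_union disjoint_bdry]
  linarith [mul_le_mul_of_nonneg_left (add_le_add h_block h_bdry) hε]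

end HatW

structure BlockCover (m : ℕ) (J : ℕ → Finset (Fin n)) : Prop where
  exists_mem : ∀ i : Fin n, ∃ k ∈ Icc 1 m, i ∈ J k
  condB1 : CondB1 m J
  condB2 : CondB2 m J

section Cover

variable {m k l : ℕ} {J : ℕ → Finset (Fin n)} {t : Fin n}

lemma mem_Jminus_iff : t ∈ Jminus m J k ↔ ∃ l ∈ Icc 1 m, l ≠ k ∧ t ∈ J l := by
  simp only [Jminus, mem_biUnion, mem_erase]
  exact ⟨fun ⟨l, ⟨hlk, hl⟩, ht⟩ => ⟨l, hl, hlk, ht⟩, fun ⟨l, hl, hlk, ht⟩ => ⟨l, ⟨hlk, hl⟩, ht⟩⟩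

lemma CondB2.notMem_of_two_le (hB2 : CondB2 m J) (hk : k ∈ Icc 1 m) (hl : l ∈ Icc 1 m)
    (hkl : l + 2 ≤ k ∨ k + 2 ≤ l) (ht : t ∈ J k ∪ bdry (J k)) : t ∉ J l := by
  intro htl
  have := bounds_of_mem_union_bdry ht
  have := blockMin_le htl
  have := le_blockMax htl
  rw [mem_Icc] at hk hl
  rcases hkl with h | h
  · have := hB2 l k hl.1 h hk.2
    omega
  · have := hB2 k l hk.1 h hl.2
    omega

lemma CondB2.adjacent_of_mem (hB2 : CondB2 m J) (hk : k ∈ Icc 1 m) (hl : l ∈ Icc 1 m)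
    (hlk : l ≠ k) (ht : t ∈ J k ∪ bdry (J k)) (htl : t ∈ J l) : l + 1 = k ∨ l = k + 1 := by
  by_contra h
  exact hB2.notMem_of_two_le hk hl (by omega) ht htl

lemma BlockCover.mem_of_notMem_Jminus (hJ : BlockCover m J) (ht : t ∉ Jminus m J k) :
    t ∈ J k := by
  obtain ⟨l, hl, htl⟩ := hJ.exists_mem t
  by_contra htk
  exact ht (mem_Jminus_iff.2 ⟨l, hl, fun h => htk (h ▸ htl), htl⟩)

lemma BlockCover.exists_adjacent_of_mem_bdry (hJ : BlockCover m J) (hk : k ∈ Icc 1 m)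
    (ht : t ∈ bdry (J k)) :
    ∃ l ∈ Icc 1 m, (l + 1 = k ∨ l = k + 1) ∧ t ∈ J l ∧ t ∉ Jminus m J l := by
  have htk := notMem_of_mem_bdry ht
  have hkt : t ∈ J k ∪ bdry (J k) := mem_union_right _ ht
  obtain ⟨l, hl, htl⟩ := hJ.exists_mem t
  have hadj := hJ.condB2.adjacent_of_mem hk hl (fun h => htk (h ▸ htl)) hkt htl
  refine ⟨l, hl, hadj, htl, fun ht' => ?_⟩
  obtain ⟨l', hl', hl'l, htl'⟩ := mem_Jminus_iff.1 ht'
  have hadj' := hJ.condB2.adjacent_of_mem hk hl' (fun h => htk (h ▸ htl')) hkt htl'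
  exact hJ.condB2.notMem_of_two_le hl hl' (by omega) (mem_union_left _ htl) htl'

lemma BlockCover.blockMin_one (hJ : BlockCover m J) (hn : 0 < n) : blockMin (J 1) = 0 := by
  obtain ⟨l, hl, h0⟩ := hJ.exists_mem ⟨0, hn⟩
  have : blockMin (J l) ≤ 0 := blockMin_le h0
  rw [mem_Icc] at hl
  rcases hl.1.eq_or_lt with rfl | h1
  · omega
  · have := (hJ.condB1.2 1 l le_rfl h1 hl.2).1
    omega

lemma BlockCover.sub_one_le_blockMax (hJ : BlockCover m J) (hn : 0 < n) :
    n - 1 ≤ blockMax (J m) := by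
  obtain ⟨l, hl, h⟩ := hJ.exists_mem ⟨n - 1, by omega⟩
  have : n - 1 ≤ blockMax (J l) := le_blockMax h
  rw [mem_Icc] at hl
  rcases hl.2.eq_or_lt with rfl | hlm
  · exact this
  · have := (hJ.condB1.2 l m hl.1 hlm le_rfl).2
    omega

-- The conventions `eL = 0` for `k = 1` and `eR = 0` for `k = m` agree with `entryZ` vanishing
-- out of range, because a cover forces `min J₁ = 0` and `max J_m = n - 1`.
lemma BlockCover.sum_bdry_eq_eL_add_eR (hJ : BlockCover m J) (hk : k ∈ Icc 1 m)
    (W : ℕ → Matrix (Fin n) (Fin n) ℝ) (i : Fin n) :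
    ∑ j ∈ bdry (J k), W k i j = eL m J W k i + eR m J W k i := by
  have hi := i.isLt
  rw [(hJ.condB1.1 k hk).sum_bdry_eq, eL, eR]
  congr 1
  · split_ifs with h
    · rw [h, hJ.blockMin_one i.pos, entryZ, dif_pos (by omega), dif_neg (by omega)]
    · rfl
  · split_ifs with h
    · have := hJ.sub_one_le_blockMax i.pos
      rw [h, entryZ, dif_pos (by omega), dif_neg (by omega)]
    · rfl

end Cover

noncomputable def parityProd (J : ℕ → Finset (Fin n)) (W : ℕ → Matrix (Fin n) (Fin n) ℝ) (ε : ℝ)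
    (m p : ℕ) : Matrix (Fin n) (Fin n) ℝ :=
  (((descList m).filter fun l => l % 2 = p).map (hatW J W ε)).prod

lemma mem_filter_descList {m p l : ℕ} :
    l ∈ (descList m).filter (fun l => l % 2 = p) ↔ l ∈ Icc 1 m ∧ l % 2 = p := by
  simp only [descList, List.mem_filter, List.mem_map, List.mem_range, mem_Icc,
    decide_eq_true_eq]
  constructor
  · rintro ⟨⟨i, hi, rfl⟩, hp⟩
    exact ⟨by omega, hp⟩
  · rintro ⟨hl, hp⟩
    exact ⟨⟨m - l, by omega, by omega⟩, hp⟩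

lemma nodup_descList (m : ℕ) : (descList m).Nodup :=
  List.nodup_range.map_on fun x hx y hy h => by
    rw [List.mem_range] at hx hy
    omega

section ParityProd

variable {m p k : ℕ} {J : ℕ → Finset (Fin n)} {W : ℕ → Matrix (Fin n) (Fin n) ℝ} {ε : ℝ}
  {i : Fin n}

lemma parityProd_mulVec_of_forall_notMem (hblock : ∀ k ∈ Icc 1 m, GibbsBlock (J k) (W k))
    (hi : ∀ l ∈ Icc 1 m, l % 2 = p → i ∉ J l) (v : Fin n → ℝ) :
    (parityProd J W ε m p *ᵥ v) i = v i := by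
  have hrow : parityProd J W ε m p i = (1 : Matrix (Fin n) (Fin n) ℝ) i :=
    row_list_prod_eq_one_row fun l hl =>
      have ⟨hl, hlp⟩ := mem_filter_descList.1 hl
      hatW_row_of_notMem (hblock l hl) (hi l hl hlp)
  rw [mulVec_apply_eq_of_row_eq hrow, one_mulVec]

lemma CondB2.parityProd_row_of_mem (hB2 : CondB2 m J)
    (hblock : ∀ k ∈ Icc 1 m, GibbsBlock (J k) (W k)) (hk : k ∈ Icc 1 m) (hkp : k % 2 = p)
    (hi : i ∈ J k) : parityProd J W ε m p i = hatW J W ε k i := by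
  have hsep : ∀ l ∈ (descList m).filter (fun l => l % 2 = p), l ≠ k →
      ∀ t ∈ J k ∪ bdry (J k), hatW J W ε l t = (1 : Matrix (Fin n) (Fin n) ℝ) t :=
    fun l hl hlk t ht =>
      have ⟨hl, hlp⟩ := mem_filter_descList.1 hl
      hatW_row_of_notMem (hblock l hl) <| hB2.notMem_of_two_le hk hl
        (by rw [mem_Icc] at hk hl; omega) ht
  exact row_list_prod_eq_of_mem ((nodup_descList m).filter _) (mem_filter_descList.2 ⟨hk, hkp⟩)
    (fun l hl hlk => hsep l hl hlk i (mem_union_left _ hi))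
    fun t ht l hl hlk =>
      hsep l hl hlk t (by_contra fun h => ht (hatW_apply_eq_zero (hblock k hk) hi h))

lemma parityProd_mulVec_le (hB1 : CondB1 m J) (hB2 : CondB2 m J)
    (hblock : ∀ k ∈ Icc 1 m, GibbsBlock (J k) (W k)) (hε : 0 ≤ ε) (hk : k ∈ Icc 1 m)
    (hkp : k % 2 = p) (hi : i ∈ J k) {v : Fin n → ℝ} {B C : ℝ} {L : ℕ} (hB : 0 ≤ B)
    (hC : 0 ≤ C) (hL : (J k).card ≤ L) (hvB : ∀ j ∈ bdry (J k), v j ≤ B)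
    (hvC : ∀ j ∈ J k, v j ≤ C) :
    (parityProd J W ε m p *ᵥ v) i ≤ (∑ j ∈ bdry (J k), W k i j) * B + ε * (2 * B + L * C) := by
  rw [mulVec_apply_eq_of_row_eq (hB2.parityProd_row_of_mem hblock hk hkp hi)]
  exact sum_hatW_mul_le (hB1.1 k hk) (hblock k hk) hε hi hB hC hL hvB hvC

end ParityProd

lemma bddAbove_setOf_exists_mem_Icc (m : ℕ) (p : ℕ → Fin n → Prop) (f : ℕ → Fin n → ℝ) :
    BddAbove {x : ℝ | ∃ k ∈ Icc 1 m, ∃ i, p k i ∧ x = f k i} := by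
  refine (((Set.finite_Icc 1 m).biUnion fun k _ => Set.finite_range (f k)).subset ?_).bddAbove
  rintro _ ⟨k, hk, i, -, rfl⟩
  exact Set.mem_biUnion (mem_Icc.1 hk) ⟨i, rfl⟩

section Profile

variable {m k L : ℕ} {J : ℕ → Finset (Fin n)} {W : ℕ → Matrix (Fin n) (Fin n) ℝ} {ε : ℝ}
  {r : Fin n → ℝ} {a a' b c lam Wbar : ℝ} {t i : Fin n}

lemma BlockCover.eq_of_mem_bdry_of_odd (hJ : BlockCover m J)
    (hra : ∀ k ∈ Icc 1 m, k % 2 = 0 → ∀ i : Fin n, i ∉ Jminus m J k → r i = a)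
    (hk : k ∈ Icc 1 m) (hk1 : k % 2 = 1) (ht : t ∈ bdry (J k)) : r t = a :=
  have ⟨l, hl, hadj, _, htl⟩ := hJ.exists_adjacent_of_mem_bdry hk ht
  hra l hl (by omega) t htl

lemma CondB2.le_max_of_mem_of_odd (hB2 : CondB2 m J)
    (hra' : ∀ k ∈ Icc 1 m, k % 2 = 1 → ∀ i : Fin n, i ∉ Jminus m J k → r i = a')
    (hrb : ∀ k ∈ Icc 1 m, k % 2 = 0 → ∀ i ∈ J k, i ∈ Jminus m J k → r i = b)
    (hk : k ∈ Icc 1 m) (hk1 : k % 2 = 1) (ht : t ∈ J k) : r t ≤ max a' b := by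
  by_cases htk : t ∈ Jminus m J k
  · obtain ⟨l, hl, hlk, htl⟩ := mem_Jminus_iff.1 htk
    have := hB2.adjacent_of_mem hk hl hlk (mem_union_left _ ht) htl
    rw [hrb l hl (by omega) t htl (mem_Jminus_iff.2 ⟨k, hk, hlk.symm, ht⟩)]
    exact le_max_right _ _
  · rw [hra' k hk hk1 t htk]
    exact le_max_left _ _

variable {v : Fin n → ℝ} {e : ℝ}

lemma BlockCover.le_of_mem_bdry_of_even (hJ : BlockCover m J)
    (hv : ∀ l ∈ Icc 1 m, l % 2 = 1 → ∀ t ∈ J l, v t ≤ (∑ j ∈ bdry (J l), W l t j) * a + e)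
    (hlam : ∀ l ∈ Icc 1 m, ∀ t, t ∉ Jminus m J l → ∑ j ∈ bdry (J l), W l t j ≤ lam)
    (ha : 0 ≤ a) (hk : k ∈ Icc 1 m) (hk0 : k % 2 = 0) (ht : t ∈ bdry (J k)) :
    v t ≤ lam * a + e := by
  obtain ⟨l, hl, hadj, htl, ht'⟩ := hJ.exists_adjacent_of_mem_bdry hk ht
  calc v t ≤ _ := hv l hl (by omega) t htl
    _ ≤ lam * a + e := by gcongr; exact hlam l hl t ht'

lemma CondB2.le_of_mem_of_even (hB2 : CondB2 m J)
    (hv : ∀ l ∈ Icc 1 m, l % 2 = 1 → ∀ t ∈ J l, v t ≤ (∑ j ∈ bdry (J l), W l t j) * a + e)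
    (hv_eq : ∀ t, (∀ l ∈ Icc 1 m, l % 2 = 1 → t ∉ J l) → v t = r t)
    (hra : ∀ k ∈ Icc 1 m, k % 2 = 0 → ∀ i : Fin n, i ∉ Jminus m J k → r i = a)
    (hWbar : ∀ l ∈ Icc 1 m, ∀ t ∈ J l, ∑ j ∈ bdry (J l), W l t j ≤ Wbar)
    (ha : 0 ≤ a) (he : 0 ≤ e) (hk : k ∈ Icc 1 m) (hk0 : k % 2 = 0) (ht : t ∈ J k) :
    v t ≤ a * max 1 Wbar + e := by
  by_cases hodd : ∃ l ∈ Icc 1 m, l % 2 = 1 ∧ t ∈ J l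
  · obtain ⟨l, hl, hl1, htl⟩ := hodd
    calc v t ≤ _ := hv l hl hl1 t htl
      _ ≤ a * max 1 Wbar + e := by
        rw [mul_comm]
        gcongr
        exact (hWbar l hl t htl).trans (le_max_right _ _)
  · push Not at hodd
    have htk : t ∉ Jminus m J k := fun h =>
      have ⟨l, hl, hlk, htl⟩ := mem_Jminus_iff.1 h
      have := hB2.adjacent_of_mem hk hl hlk (mem_union_left _ ht) htl
      hodd l hl (by omega) htl
    rw [hv_eq t hodd, hra k hk hk0 t htk]
    linarith [le_mul_of_one_le_right ha (le_max_left 1 Wbar)]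

lemma BlockCover.parityProd_one_mulVec_le (hJ : BlockCover m J)
    (hblock : ∀ k ∈ Icc 1 m, GibbsBlock (J k) (W k)) (hε : 0 ≤ ε)
    (hcard : ∀ k ∈ Icc 1 m, (J k).card ≤ L)
    (hra : ∀ k ∈ Icc 1 m, k % 2 = 0 → ∀ i : Fin n, i ∉ Jminus m J k → r i = a)
    (hra' : ∀ k ∈ Icc 1 m, k % 2 = 1 → ∀ i : Fin n, i ∉ Jminus m J k → r i = a')
    (hrb : ∀ k ∈ Icc 1 m, k % 2 = 0 → ∀ i ∈ J k, i ∈ Jminus m J k → r i = b)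
    (ha : 0 ≤ a) (hR : 0 ≤ max a' b) (hc : c = 2 * a + L * max a' b)
    (hk : k ∈ Icc 1 m) (hk1 : k % 2 = 1) (ht : t ∈ J k) :
    (parityProd J W ε m 1 *ᵥ r) t ≤ (∑ j ∈ bdry (J k), W k t j) * a + ε * c :=
  hc ▸ parityProd_mulVec_le hJ.condB1 hJ.condB2 hblock hε hk hk1 ht ha hR (hcard k hk)
    (fun _ hj => (hJ.eq_of_mem_bdry_of_odd hra hk hk1 hj).le)
    (fun _ hj => hJ.condB2.le_max_of_mem_of_odd hra' hrb hk hk1 hj)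

lemma BlockCover.parityProd_mul_mulVec_le_of_even (hJ : BlockCover m J)
    (hblock : ∀ k ∈ Icc 1 m, GibbsBlock (J k) (W k)) (hε : 0 ≤ ε)
    (hcard : ∀ k ∈ Icc 1 m, (J k).card ≤ L)
    (hlam : ∀ k ∈ Icc 1 m, ∀ i, i ∉ Jminus m J k → ∑ j ∈ bdry (J k), W k i j ≤ lam)
    (hWbar : ∀ k ∈ Icc 1 m, ∀ i ∈ J k, ∑ j ∈ bdry (J k), W k i j ≤ Wbar)
    (hra : ∀ k ∈ Icc 1 m, k % 2 = 0 → ∀ i : Fin n, i ∉ Jminus m J k → r i = a)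
    (hra' : ∀ k ∈ Icc 1 m, k % 2 = 1 → ∀ i : Fin n, i ∉ Jminus m J k → r i = a')
    (hrb : ∀ k ∈ Icc 1 m, k % 2 = 0 → ∀ i ∈ J k, i ∈ Jminus m J k → r i = b)
    (hlam0 : 0 ≤ lam) (ha : 0 ≤ a) (hR : 0 ≤ max a' b) (hc : c = 2 * a + L * max a' b)
    (hk : k ∈ Icc 1 m) (hk0 : k % 2 = 0) (hi : i ∈ J k) :
    ((parityProd J W ε m 0 * parityProd J W ε m 1) *ᵥ r) i ≤
      (∑ j ∈ bdry (J k), W k i j) * (lam * a + ε * c) +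
        ε * (2 * (lam * a + ε * c) + L * (a * max 1 Wbar + ε * c)) := by
  have hc0 : 0 ≤ c := hc ▸ by positivity
  have hv : ∀ l ∈ Icc 1 m, l % 2 = 1 → ∀ t ∈ J l, (parityProd J W ε m 1 *ᵥ r) t ≤
      (∑ j ∈ bdry (J l), W l t j) * a + ε * c := fun l hl hl1 t ht =>
    hJ.parityProd_one_mulVec_le hblock hε hcard hra hra' hrb ha hR hc hl hl1 ht
  rw [← mulVec_mulVec]
  exact parityProd_mulVec_le hJ.condB1 hJ.condB2 hblock hε hk hk0 hi (by positivity)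
    (by positivity) (hcard k hk) (fun t ht => hJ.le_of_mem_bdry_of_even hv hlam ha hk hk0 ht)
    (fun t ht => hJ.condB2.le_of_mem_of_even hv
      (fun t h => parityProd_mulVec_of_forall_notMem hblock h r) hra hWbar ha (by positivity)
      hk hk0 ht)

lemma BlockCover.parityProd_mul_mulVec_le_of_odd (hJ : BlockCover m J)
    (hblock : ∀ k ∈ Icc 1 m, GibbsBlock (J k) (W k)) (hε : 0 ≤ ε)
    (hcard : ∀ k ∈ Icc 1 m, (J k).card ≤ L)
    (hlam : ∀ k ∈ Icc 1 m, ∀ i, i ∉ Jminus m J k → ∑ j ∈ bdry (J k), W k i j ≤ lam)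
    (hra : ∀ k ∈ Icc 1 m, k % 2 = 0 → ∀ i : Fin n, i ∉ Jminus m J k → r i = a)
    (hra' : ∀ k ∈ Icc 1 m, k % 2 = 1 → ∀ i : Fin n, i ∉ Jminus m J k → r i = a')
    (hrb : ∀ k ∈ Icc 1 m, k % 2 = 0 → ∀ i ∈ J k, i ∈ Jminus m J k → r i = b)
    (ha : 0 ≤ a) (hR : 0 ≤ max a' b) (hc : c = 2 * a + L * max a' b)
    (hk : k ∈ Icc 1 m) (hk1 : k % 2 = 1) (hi : i ∉ Jminus m J k) :
    ((parityProd J W ε m 0 * parityProd J W ε m 1) *ᵥ r) i ≤ lam * a + ε * c := by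
  have hi_even : ∀ l ∈ Icc 1 m, l % 2 = 0 → i ∉ J l := fun l hl hl0 hil =>
    hi (mem_Jminus_iff.2 ⟨l, hl, by omega, hil⟩)
  rw [← mulVec_mulVec, parityProd_mulVec_of_forall_notMem hblock hi_even]
  calc _ ≤ _ := hJ.parityProd_one_mulVec_le hblock hε hcard hra hra' hrb ha hR hc hk hk1
        (hJ.mem_of_notMem_Jminus hi)
    _ ≤ lam * a + ε * c := by
      gcongr
      exact hlam k hk i hi

end Profile

theorem stmt13_general {n m : ℕ}
    (J : ℕ → Finset (Fin n)) (W : ℕ → Matrix (Fin n) (Fin n) ℝ)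
    (hcover : ∀ i : Fin n, ∃ k ∈ Finset.Icc 1 m, i ∈ J k)
    (hB1 : CondB1 m J) (hB2 : CondB2 m J)
    (hblock : ∀ k ∈ Finset.Icc 1 m, GibbsBlock (J k) (W k))
    (ε : ℝ) (hε0 : 0 ≤ ε)
    (lam Wbar : ℝ) (L : ℕ)
    (hlam : lam = sSup {x : ℝ | ∃ k ∈ Finset.Icc 1 m, ∃ i : Fin n,
      i ∉ Jminus m J k ∧ x = eL m J W k i + eR m J W k i})
    (hWbar : Wbar = sSup {x : ℝ | ∃ k ∈ Finset.Icc 1 m, ∃ i ∈ J k,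
      x = ∑ j ∈ bdry (J k), W k i j})
    (hL : L = (Finset.Icc 1 m).sup fun k => (J k).card)
    (r : Fin n → ℝ) (a a' b : ℝ) (ha : 0 < a) (ha' : 0 < a')
    (hra : ∀ k ∈ Finset.Icc 1 m, k % 2 = 0 → ∀ i : Fin n, i ∉ Jminus m J k → r i = a)
    (hra' : ∀ k ∈ Finset.Icc 1 m, k % 2 = 1 → ∀ i : Fin n, i ∉ Jminus m J k → r i = a')
    (hrb : ∀ k ∈ Finset.Icc 1 m, k % 2 = 0 → ∀ i ∈ J k, i ∈ Jminus m J k → r i = b)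
    (c : ℝ) (hc : c = 2 * a + (L : ℝ) * max a' b) :
    (∀ k ∈ Finset.Icc 1 m, k % 2 = 0 → ∀ i : Fin n, i ∉ Jminus m J k →
      ∑ j, (((((descList m).filter fun l => l % 2 = 0).map (hatW J W ε)).prod) *
          ((((descList m).filter fun l => l % 2 = 1).map (hatW J W ε)).prod)) i j * r j ≤
        lam ^ 2 * a + ε * (lam * c + 2 * lam * a + 2 * ε * c +
          (L : ℝ) * a * max 1 Wbar + ε * (L : ℝ) * c)) ∧
    (∀ k ∈ Finset.Icc 1 m, k % 2 = 1 → ∀ i : Fin n, i ∉ Jminus m J k →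
      ∑ j, (((((descList m).filter fun l => l % 2 = 0).map (hatW J W ε)).prod) *
          ((((descList m).filter fun l => l % 2 = 1).map (hatW J W ε)).prod)) i j * r j ≤
        lam * a + ε * (2 * a + (L : ℝ) * max a' b)) ∧
    (∀ k ∈ Finset.Icc 1 m, k % 2 = 0 → ∀ i ∈ J k, i ∈ Jminus m J k →
      ∑ j, (((((descList m).filter fun l => l % 2 = 0).map (hatW J W ε)).prod) *
          ((((descList m).filter fun l => l % 2 = 1).map (hatW J W ε)).prod)) i j * r j ≤
        lam * Wbar * a + ε * (Wbar * c + 2 * lam * a + 2 * ε * c +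
          (L : ℝ) * a * max 1 Wbar + ε * (L : ℝ) * c)) := by
  have hJ : BlockCover m J := ⟨hcover, hB1, hB2⟩
  have hlam_ge : ∀ k ∈ Icc 1 m, ∀ i, i ∉ Jminus m J k → ∑ j ∈ bdry (J k), W k i j ≤ lam :=
    fun k hk i hi => by
      rw [hlam, hJ.sum_bdry_eq_eL_add_eR hk]
      exact le_csSup (bddAbove_setOf_exists_mem_Icc _ _ _) ⟨k, hk, i, hi, rfl⟩
  have hWbar_ge : ∀ k ∈ Icc 1 m, ∀ i ∈ J k, ∑ j ∈ bdry (J k), W k i j ≤ Wbar :=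
    fun k hk i hi => hWbar ▸ le_csSup (bddAbove_setOf_exists_mem_Icc _ _ _) ⟨k, hk, i, hi, rfl⟩
  have hlam0 : 0 ≤ lam := hlam ▸ Real.sSup_nonneg (by
    rintro _ ⟨k, hk, i, -, rfl⟩
    rw [← hJ.sum_bdry_eq_eL_add_eR hk]
    exact sum_nonneg fun j _ => ((hblock k hk).1 i j).1)
  have hcard : ∀ k ∈ Icc 1 m, (J k).card ≤ L := fun k hk =>
    hL ▸ le_sup (f := fun k => (J k).card) hk
  have hR : 0 ≤ max a' b := le_max_of_le_left ha'.le
  have hc0 : 0 ≤ c := hc ▸ by positivity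
  refine ⟨fun k hk hk0 i hi => ?_, fun k hk hk1 i hi => ?_, fun k hk hk0 i hik _ => ?_⟩ <;>
    change ((parityProd J W ε m 0 * parityProd J W ε m 1) *ᵥ r) i ≤ _
  · calc _ ≤ _ := hJ.parityProd_mul_mulVec_le_of_even hblock hε0 hcard hlam_ge hWbar_ge hra hra'
          hrb hlam0 ha.le hR hc hk hk0 (hJ.mem_of_notMem_Jminus hi)
      _ ≤ lam * (lam * a + ε * c) +
          ε * (2 * (lam * a + ε * c) + L * (a * max 1 Wbar + ε * c)) := by
        gcongr
        exact hlam_ge k hk i hi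
      _ = _ := by ring
  · exact hc ▸ hJ.parityProd_mul_mulVec_le_of_odd hblock hε0 hcard hlam_ge hra hra' hrb ha.le hR hc
      hk hk1 hi
  · calc _ ≤ _ := hJ.parityProd_mul_mulVec_le_of_even hblock hε0 hcard hlam_ge hWbar_ge hra hra'
          hrb hlam0 ha.le hR hc hk hk0 hik
      _ ≤ Wbar * (lam * a + ε * c) +
          ε * (2 * (lam * a + ε * c) + L * (a * max 1 Wbar + ε * c)) := by
        gcongr
        exact hWbar_ge k hk i hik
      _ = _ := by ring

theorem stmt13 {n m : ℕ} (hn : 1 ≤ n) (hm : 1 ≤ m) (hmodd : m % 2 = 1)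
    (J : ℕ → Finset (Fin n)) (W : ℕ → Matrix (Fin n) (Fin n) ℝ)
    (hcover : ∀ i : Fin n, ∃ k ∈ Finset.Icc 1 m, i ∈ J k)
    (hB1 : CondB1 m J) (hB2 : CondB2 m J)
    (hblock : ∀ k ∈ Finset.Icc 1 m, GibbsBlock (J k) (W k))
    (ε : ℝ) (hε0 : 0 ≤ ε) (hε1 : ε < 1)
    (lam Wbar : ℝ) (L : ℕ)
    (hlam : lam = sSup {x : ℝ | ∃ k ∈ Finset.Icc 1 m, ∃ i : Fin n,
      i ∉ Jminus m J k ∧ x = eL m J W k i + eR m J W k i})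
    (hWbar : Wbar = sSup {x : ℝ | ∃ k ∈ Finset.Icc 1 m, ∃ i ∈ J k,
      x = ∑ j ∈ bdry (J k), W k i j})
    (hL : L = (Finset.Icc 1 m).sup fun k => (J k).card)
    (r : Fin n → ℝ) (a a' b : ℝ) (ha : 0 < a) (ha' : 0 < a') (hb : 0 < b)
    (hra : ∀ k ∈ Finset.Icc 1 m, k % 2 = 0 → ∀ i : Fin n, i ∉ Jminus m J k → r i = a)
    (hra' : ∀ k ∈ Finset.Icc 1 m, k % 2 = 1 → ∀ i : Fin n, i ∉ Jminus m J k → r i = a')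
    (hrb : ∀ k ∈ Finset.Icc 1 m, k % 2 = 0 → ∀ i ∈ J k, i ∈ Jminus m J k → r i = b)
    (c : ℝ) (hc : c = 2 * a + (L : ℝ) * max a' b) :
    (∀ k ∈ Finset.Icc 1 m, k % 2 = 0 → ∀ i : Fin n, i ∉ Jminus m J k →
      ∑ j, (((((descList m).filter fun l => l % 2 = 0).map (hatW J W ε)).prod) *
          ((((descList m).filter fun l => l % 2 = 1).map (hatW J W ε)).prod)) i j * r j ≤
        lam ^ 2 * a + ε * (lam * c + 2 * lam * a + 2 * ε * c +
          (L : ℝ) * a * max 1 Wbar + ε * (L : ℝ) * c)) ∧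
    (∀ k ∈ Finset.Icc 1 m, k % 2 = 1 → ∀ i : Fin n, i ∉ Jminus m J k →
      ∑ j, (((((descList m).filter fun l => l % 2 = 0).map (hatW J W ε)).prod) *
          ((((descList m).filter fun l => l % 2 = 1).map (hatW J W ε)).prod)) i j * r j ≤
        lam * a + ε * (2 * a + (L : ℝ) * max a' b)) ∧
    (∀ k ∈ Finset.Icc 1 m, k % 2 = 0 → ∀ i ∈ J k, i ∈ Jminus m J k →
      ∑ j, (((((descList m).filter fun l => l % 2 = 0).map (hatW J W ε)).prod) *
          ((((descList m).filter fun l => l % 2 = 1).map (hatW J W ε)).prod)) i j * r j ≤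
        lam * Wbar * a + ε * (Wbar * c + 2 * lam * a + 2 * ε * c +
          (L : ℝ) * a * max 1 Wbar + ε * (L : ℝ) * c)) :=
  stmt13_general J W hcover hB1 hB2 hblock ε hε0 lam Wbar L hlam hWbar hL r a a' b ha ha' hra hra'
    hrb c hc
end
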